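/- Work in GL₃ over the field F = ℂ(λ) of rational functions in λ. For u ∈ ℂ, u ≠ 0, let M̌(u) ∈ GL₃(F) be the matrix [[λ,1,0],[0,0,1],[−u,0,0]] (determinant −u ≠ 0), and let ℋ₂ := { diag(1, a₂, a₁) : a₁, a₂ ∈ ℂ, a₁ ≠ 0, a₂ ≠ 0 }. Then the subgroup of GL₃(F) generated by ℋ₂ together with the set { M̌(u)·h·M̌(u)⁻¹ : h ∈ ℋ₂, u ∈ ℂ, u ≠ 0 } equals the set of matrices { [[a₃, 0, a₄·λ],[0, a₂, 0],[0, 0, a₁]] : a₁,a₂,a₃,a₄ ∈ ℂ, a₁ ≠ 0, a₂ ≠ 0, a₃ ≠ 0 }. (This is the group ℋ₃ for the gauge-transformed Darboux–Lax representation of the Bogoyavlensky lattice with p = 2.) -/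

import Mathlib

/-!
Write `h3Matrix a₁ a₂ a₃ a₄` for `[[a₃,0,a₄λ],[0,a₂,0],[0,0,a₁]]`. These matrices (with
`a₁a₂a₃ ≠ 0`) form a group, and a direct computation gives
`M̌(u)·diag(1,a₂,a₁)·M̌(u)⁻¹ = h3Matrix 1 a₁ a₂ ((a₂-1)/u)`, so the generated group lies in `ℋ₃`.
Conversely `h3Matrix a₁ a₂ a₃ a₄ = h3Matrix 1 1 a₃ (a₄/a₁) · diag(1,a₂,a₁)`, and the matrices
`h3Matrix 1 1 b c` multiply like the affine maps `z ↦ b z + c` of `ℂ`. The conjugates supply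
every such map with `b ≠ 1` and `c ≠ 0`, and an arbitrary affine map is `g k⁻¹` for two of these.
-/

open Matrix

/-- The gauge-transformed Darboux matrix `M̌(u) = [[λ,1,0],[0,0,1],[−u,0,0]]`
of the Bogoyavlensky lattice with `p = 2`, over the field `ℂ(λ)`. -/
noncomputable def bogDarbouxMatrix (u : ℂ) :
    Matrix (Fin 3) (Fin 3) (RatFunc ℂ) :=
  !![RatFunc.X, 1, 0; 0, 0, 1; -(algebraMap ℂ (RatFunc ℂ) u), 0, 0]

local notation "ι" => algebraMap ℂ (RatFunc ℂ)

noncomputable def h3Matrix (a₁ a₂ a₃ a₄ : ℂ) : Matrix (Fin 3) (Fin 3) (RatFunc ℂ) :=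
  !![ι a₃, 0, ι a₄ * RatFunc.X; 0, ι a₂, 0; 0, 0, ι a₁]

theorem h3Matrix_mul (a₁ a₂ a₃ a₄ b₁ b₂ b₃ b₄ : ℂ) :
    h3Matrix a₁ a₂ a₃ a₄ * h3Matrix b₁ b₂ b₃ b₄
      = h3Matrix (a₁ * b₁) (a₂ * b₂) (a₃ * b₃) (a₃ * b₄ + a₄ * b₁) := by
  ext i j
  fin_cases i <;> fin_cases j <;> simp [h3Matrix]
  ring

theorem h3Matrix_one_one_one_zero : h3Matrix 1 1 1 0 = 1 := by
  simp [h3Matrix, one_fin_three]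

theorem det_h3Matrix (a₁ a₂ a₃ a₄ : ℂ) : (h3Matrix a₁ a₂ a₃ a₄).det = ι (a₁ * a₂ * a₃) := by
  simp only [h3Matrix, det_fin_three, of_apply, cons_val', cons_val_zero, cons_val_fin_one,
    cons_val_one, cons_val, mul_zero, sub_zero, zero_mul, add_zero, map_mul]
  ring

noncomputable def h3Unit (a₁ a₂ a₃ a₄ : ℂ) (h₁ : a₁ ≠ 0) (h₂ : a₂ ≠ 0) (h₃ : a₃ ≠ 0) :
    GL (Fin 3) (RatFunc ℂ) :=
  GeneralLinearGroup.mkOfDetNeZero (h3Matrix a₁ a₂ a₃ a₄) <| by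
    rw [det_h3Matrix, map_ne_zero]
    exact mul_ne_zero (mul_ne_zero h₁ h₂) h₃

@[simp]
theorem coe_h3Unit (a₁ a₂ a₃ a₄ : ℂ) (h₁ : a₁ ≠ 0) (h₂ : a₂ ≠ 0) (h₃ : a₃ ≠ 0) :
    (h3Unit a₁ a₂ a₃ a₄ h₁ h₂ h₃ : Matrix (Fin 3) (Fin 3) (RatFunc ℂ)) = h3Matrix a₁ a₂ a₃ a₄ :=
  rfl

theorem det_bogDarbouxMatrix (u : ℂ) : (bogDarbouxMatrix u).det = -ι u := by
  simp [bogDarbouxMatrix, det_fin_three]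

theorem bogDarbouxMatrix_mul_h3Matrix {u : ℂ} (hu : u ≠ 0) (a₁ a₂ : ℂ) :
    bogDarbouxMatrix u * h3Matrix a₁ a₂ 1 0
      = h3Matrix 1 a₁ a₂ ((a₂ - 1) / u) * bogDarbouxMatrix u := by
  ext i j
  fin_cases i <;> fin_cases j <;> simp [bogDarbouxMatrix, h3Matrix]
  have : RatFunc.C u ≠ 0 := by simpa using hu
  field_simp
  ring

theorem bogDarbouxMatrix_conj_h3Matrix {u : ℂ} (hu : u ≠ 0) (a₁ a₂ : ℂ) :
    bogDarbouxMatrix u * h3Matrix a₁ a₂ 1 0 * (bogDarbouxMatrix u)⁻¹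
      = h3Matrix 1 a₁ a₂ ((a₂ - 1) / u) := by
  have hdet : IsUnit (bogDarbouxMatrix u).det := by
    rw [det_bogDarbouxMatrix, isUnit_iff_ne_zero, neg_ne_zero, map_ne_zero]
    exact hu
  rw [bogDarbouxMatrix_mul_h3Matrix hu, Matrix.mul_assoc, mul_nonsing_inv _ hdet, Matrix.mul_one]

theorem diagonal_eq_h3Matrix (a₁ a₂ : ℂ) :
    (!![1, 0, 0; 0, ι a₂, 0; 0, 0, ι a₁] : Matrix (Fin 3) (Fin 3) (RatFunc ℂ))
      = h3Matrix a₁ a₂ 1 0 := by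
  simp [h3Matrix]

theorem h3Matrix_mul_h3Matrix_inv_params {a₁ a₃ : ℂ} (h₁ : a₁ ≠ 0) (a₂ : ℂ) (h₂ : a₂ ≠ 0)
    (h₃ : a₃ ≠ 0) (a₄ : ℂ) :
    h3Matrix a₁ a₂ a₃ a₄ * h3Matrix a₁⁻¹ a₂⁻¹ a₃⁻¹ (-(a₄ / (a₃ * a₁))) = 1 := by
  have h₄ : a₃ * -(a₄ / (a₃ * a₁)) + a₄ * a₁⁻¹ = 0 := by
    field_simp
    ring
  rw [h3Matrix_mul, mul_inv_cancel₀ h₁, mul_inv_cancel₀ h₂, mul_inv_cancel₀ h₃, h₄,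
    h3Matrix_one_one_one_zero]

noncomputable def bogH3 : Subgroup (GL (Fin 3) (RatFunc ℂ)) where
  carrier := {g | ∃ a₁ a₂ a₃ a₄ : ℂ, a₁ ≠ 0 ∧ a₂ ≠ 0 ∧ a₃ ≠ 0 ∧
    (g : Matrix (Fin 3) (Fin 3) (RatFunc ℂ)) = h3Matrix a₁ a₂ a₃ a₄}
  one_mem' := ⟨1, 1, 1, 0, one_ne_zero, one_ne_zero, one_ne_zero, h3Matrix_one_one_one_zero.symm⟩
  mul_mem' := by
    rintro x y ⟨a₁, a₂, a₃, a₄, h₁, h₂, h₃, hx⟩ ⟨b₁, b₂, b₃, b₄, g₁, g₂, g₃, hy⟩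
    exact ⟨_, _, _, _, mul_ne_zero h₁ g₁, mul_ne_zero h₂ g₂, mul_ne_zero h₃ g₃,
      by rw [Units.val_mul, hx, hy, h3Matrix_mul]⟩
  inv_mem' := by
    rintro x ⟨a₁, a₂, a₃, a₄, h₁, h₂, h₃, hx⟩
    refine ⟨a₁⁻¹, a₂⁻¹, a₃⁻¹, -(a₄ / (a₃ * a₁)), inv_ne_zero h₁, inv_ne_zero h₂,
      inv_ne_zero h₃, ?_⟩
    rw [coe_units_inv, hx]
    exact inv_eq_right_inv (h3Matrix_mul_h3Matrix_inv_params h₁ a₂ h₂ h₃ a₄)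

def bogGenerators : Set (GL (Fin 3) (RatFunc ℂ)) :=
  {g | ∃ a₁ a₂ : ℂ, a₁ ≠ 0 ∧ a₂ ≠ 0 ∧
    (g : Matrix (Fin 3) (Fin 3) (RatFunc ℂ)) = !![1, 0, 0; 0, ι a₂, 0; 0, 0, ι a₁]} ∪
  {g | ∃ a₁ a₂ u : ℂ, a₁ ≠ 0 ∧ a₂ ≠ 0 ∧ u ≠ 0 ∧
    (g : Matrix (Fin 3) (Fin 3) (RatFunc ℂ)) =
      bogDarbouxMatrix u * !![1, 0, 0; 0, ι a₂, 0; 0, 0, ι a₁] * (bogDarbouxMatrix u)⁻¹}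

theorem bogGenerators_subset_bogH3 : bogGenerators ⊆ bogH3 := by
  rintro g (⟨a₁, a₂, h₁, h₂, hg⟩ | ⟨a₁, a₂, u, h₁, h₂, hu, hg⟩)
  · exact ⟨a₁, a₂, 1, 0, h₁, h₂, one_ne_zero, by rw [hg, diagonal_eq_h3Matrix]⟩
  · refine ⟨1, a₁, a₂, (a₂ - 1) / u, one_ne_zero, h₁, h₂, ?_⟩
    rw [hg, diagonal_eq_h3Matrix, bogDarbouxMatrix_conj_h3Matrix hu]

theorem h3Unit_mem_closure_bogGenerators_of_ne_one {b c : ℂ} (hb : b ≠ 0) (hb₁ : b ≠ 1)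
    (hc : c ≠ 0) :
    h3Unit 1 1 b c one_ne_zero one_ne_zero hb ∈ Subgroup.closure bogGenerators := by
  have hu : (b - 1) / c ≠ 0 := div_ne_zero (sub_ne_zero.2 hb₁) hc
  refine Subgroup.subset_closure (Or.inr ⟨1, b, (b - 1) / c, one_ne_zero, hb, hu, ?_⟩)
  rw [coe_h3Unit, diagonal_eq_h3Matrix, bogDarbouxMatrix_conj_h3Matrix hu,
    div_div_cancel₀ (sub_ne_zero.2 hb₁)]

theorem h3Unit_mem_closure_bogGenerators {b : ℂ} (hb : b ≠ 0) (c : ℂ) :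
    h3Unit 1 1 b c one_ne_zero one_ne_zero hb ∈ Subgroup.closure bogGenerators := by
  obtain ⟨β, hβ⟩ := Infinite.exists_notMem_finset ({0, 1, b⁻¹} : Finset ℂ)
  obtain ⟨γ, hγ⟩ := Infinite.exists_notMem_finset ({0, -c / b} : Finset ℂ)
  simp only [Finset.mem_insert, Finset.mem_singleton, not_or] at hβ hγ
  obtain ⟨hβ₀, hβ₁, hβb⟩ := hβ
  obtain ⟨hγ₀, hγc⟩ := hγ
  have hbβ : b * β ≠ 1 := fun h => hβb (eq_inv_of_mul_eq_one_right h)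
  have hbγc : b * γ + c ≠ 0 := fun h => hγc (by field_simp; linear_combination h)
  have hsplit : h3Unit 1 1 b c one_ne_zero one_ne_zero hb
      = h3Unit 1 1 (b * β) (b * γ + c) one_ne_zero one_ne_zero (mul_ne_zero hb hβ₀)
        * (h3Unit 1 1 β γ one_ne_zero one_ne_zero hβ₀)⁻¹ := by
    rw [eq_mul_inv_iff_mul_eq]
    ext : 1
    rw [Units.val_mul, coe_h3Unit, coe_h3Unit, coe_h3Unit, h3Matrix_mul, mul_one, mul_one]
  rw [hsplit]
  exact mul_mem (h3Unit_mem_closure_bogGenerators_of_ne_one _ hbβ hbγc)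
    (inv_mem (h3Unit_mem_closure_bogGenerators_of_ne_one hβ₀ hβ₁ hγ₀))

theorem bogH3_le_closure_bogGenerators : bogH3 ≤ Subgroup.closure bogGenerators := by
  rintro g ⟨a₁, a₂, a₃, a₄, h₁, h₂, h₃, hg⟩
  have hsplit : g = h3Unit 1 1 a₃ (a₄ / a₁) one_ne_zero one_ne_zero h₃
      * h3Unit a₁ a₂ 1 0 h₁ h₂ one_ne_zero := by
    ext : 1
    rw [hg, Units.val_mul, coe_h3Unit, coe_h3Unit, h3Matrix_mul, one_mul, one_mul, mul_one,
      mul_zero, zero_add, div_mul_cancel₀ a₄ h₁]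
  have hdiag : h3Unit a₁ a₂ 1 0 h₁ h₂ one_ne_zero ∈ bogGenerators :=
    Or.inl ⟨a₁, a₂, h₁, h₂, by rw [coe_h3Unit, diagonal_eq_h3Matrix]⟩
  rw [hsplit]
  exact mul_mem (h3Unit_mem_closure_bogGenerators h₃ _) (Subgroup.subset_closure hdiag)

/-- The group `ℋ₃` for the gauge-transformed Darboux–Lax representation of the
Bogoyavlensky lattice with `p = 2`: the subgroup of `GL₃(ℂ(λ))` generated by
`ℋ₂ = {diag(1,a₂,a₁)}` together with all conjugates `M̌(u)·h·M̌(u)⁻¹` (for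
`h ∈ ℋ₂` and nonzero `u ∈ ℂ`) is exactly the set of matrices
`[[a₃,0,a₄λ],[0,a₂,0],[0,0,a₁]]` with `a₁,a₂,a₃ ≠ 0`. -/
theorem bogoyavlensky_H3_group :
    (Subgroup.closure
      ({ g : GL (Fin 3) (RatFunc ℂ) |
          ∃ a₁ a₂ : ℂ, a₁ ≠ 0 ∧ a₂ ≠ 0 ∧
            (g : Matrix (Fin 3) (Fin 3) (RatFunc ℂ)) =
              !![1, 0, 0;
                 0, algebraMap ℂ (RatFunc ℂ) a₂, 0;
                 0, 0, algebraMap ℂ (RatFunc ℂ) a₁] }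
        ∪
        { g : GL (Fin 3) (RatFunc ℂ) |
          ∃ a₁ a₂ u : ℂ, a₁ ≠ 0 ∧ a₂ ≠ 0 ∧ u ≠ 0 ∧
            (g : Matrix (Fin 3) (Fin 3) (RatFunc ℂ)) =
              bogDarbouxMatrix u *
                !![1, 0, 0;
                   0, algebraMap ℂ (RatFunc ℂ) a₂, 0;
                   0, 0, algebraMap ℂ (RatFunc ℂ) a₁] *
                (bogDarbouxMatrix u)⁻¹ }) :
      Set (GL (Fin 3) (RatFunc ℂ)))
    = { g : GL (Fin 3) (RatFunc ℂ) |
        ∃ a₁ a₂ a₃ a₄ : ℂ, a₁ ≠ 0 ∧ a₂ ≠ 0 ∧ a₃ ≠ 0 ∧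
          (g : Matrix (Fin 3) (Fin 3) (RatFunc ℂ)) =
            !![algebraMap ℂ (RatFunc ℂ) a₃, 0,
                 algebraMap ℂ (RatFunc ℂ) a₄ * RatFunc.X;
               0, algebraMap ℂ (RatFunc ℂ) a₂, 0;
               0, 0, algebraMap ℂ (RatFunc ℂ) a₁] } := by
  have h : Subgroup.closure bogGenerators = bogH3 :=
    le_antisymm ((Subgroup.closure_le _).2 bogGenerators_subset_bogH3)
      bogH3_le_closure_bogGenerators
  exact congrArg SetLike.coe h
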